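/- The relations (p−a)(p−b)·∂_p S_{a,b} = (a−b)(S_{a,p}S_{p,b} − S_{a,b}) are multidimensionally consistent: if smooth functions S_{a,b}(ξ_p, ξ_q) (for all pairwise distinct labels drawn from {a,b,p,q}) satisfy these relations in both variables ξ_p and ξ_q, then the two mixed second derivatives ∂_q∂_p S_{a,b} and ∂_p∂_q S_{a,b}, computed by substituting the relations, agree identically as algebraic expressions in the S's. -/

import Mathlib

/-- Partial derivative in the direction of the Miwa variable `ξ_p`. -/
noncomputable def pd {N : ℕ} (p : Fin N) (f : (Fin N → ℝ) → ℂ) (x : Fin N → ℝ) : ℂ :=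
  fderiv ℝ f x (Pi.single p 1)

lemma pd_comm {N : ℕ} (p q : Fin N) (f : (Fin N → ℝ) → ℂ) (hf : ContDiff ℝ (⊤ : ℕ∞) f)
    (x : Fin N → ℝ) : pd q (pd p f) x = pd p (pd q f) x := by
  have hdf : Differentiable ℝ (fderiv ℝ f) :=
    (hf.fderiv_right (m := 1) (WithTop.coe_le_coe.mpr le_top)).differentiable one_ne_zero
  have key : ∀ v w : Fin N → ℝ,
      fderiv ℝ (fun y => fderiv ℝ f y v) x w = fderiv ℝ (fderiv ℝ f) x w v := by
    intro v w
    rw [fderiv_clm_apply (hdf x) (differentiableAt_const v)]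
    simp
  have hsym : IsSymmSndFDerivAt ℝ f x :=
    (hf.contDiffAt).isSymmSndFDerivAt (by rw [minSmoothness_of_isRCLikeNormedField]; exact (WithTop.coe_le_coe.mpr (le_top : (2 : ℕ∞) ≤ ⊤) : ((2 : ℕ∞) : WithTop ℕ∞) ≤ _))
  show fderiv ℝ (fun y => fderiv ℝ f y (Pi.single p 1)) x (Pi.single q 1)
      = fderiv ℝ (fun y => fderiv ℝ f y (Pi.single q 1)) x (Pi.single p 1)
  rw [key, key, hsym.eq]

lemma pd_combo {N : ℕ} (p : Fin N) (c : ℂ) (f g h : (Fin N → ℝ) → ℂ)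
    (hf : Differentiable ℝ f) (hg : Differentiable ℝ g) (hh : Differentiable ℝ h)
    (x : Fin N → ℝ) :
    pd p (fun y => c * (f y * g y - h y)) x
      = c * (pd p f x * g x + f x * pd p g x - pd p h x) := by
  simp only [pd]
  rw [fderiv_const_mul (a := fun y => f y * g y - h y) (((hf x).mul (hg x)).sub (hh x)),
    fderiv_fun_sub (f := fun y => f y * g y) ((hf x).mul (hg x)) (hh x), fderiv_fun_mul (hf x) (hg x)]
  simp only [ContinuousLinearMap.coe_smul', Pi.smul_apply, ContinuousLinearMap.coe_sub',
    Pi.sub_apply, Pi.add_apply, smul_eq_mul, ContinuousLinearMap.add_apply]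
  ring

/-- the generating relations for `S_{a,b}` are multidimensionally
consistent: the two mixed second derivatives, computed by substituting the
relations, agree. -/
theorem S_relations_consistent {N : ℕ}
    (par : Fin N → ℂ) (hpar : Function.Injective par)
    (S : Fin N → Fin N → (Fin N → ℝ) → ℂ)
    (hSsmooth : ∀ a b, a ≠ b → ContDiff ℝ (⊤ : ℕ∞) (S a b))
    (hS : ∀ a b p, a ≠ b → a ≠ p → b ≠ p → ∀ x,
      (par p - par a) * (par p - par b) * pd p (S a b) x
        = (par a - par b) * (S a p x * S p b x - S a b x))
    (a b p q : Fin N)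
    (hab : a ≠ b) (hap : a ≠ p) (haq : a ≠ q)
    (hbp : b ≠ p) (hbq : b ≠ q) (hpq : p ≠ q) :
    ∀ x : Fin N → ℝ,
      (par q - par a) * (par q - par b) *
        pd q (fun y => (par a - par b) * (S a p y * S p b y - S a b y)) x
      = (par p - par a) * (par p - par b) *
        pd p (fun y => (par a - par b) * (S a q y * S q b y - S a b y)) x ∧
      pd q (pd p (S a b)) x = pd p (pd q (S a b)) x := by
  intro x
  have hQA : par q - par a ≠ 0 := sub_ne_zero.mpr (fun h => haq (hpar h).symm)
  have hQB : par q - par b ≠ 0 := sub_ne_zero.mpr (fun h => hbq (hpar h).symm)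
  have hQP : par q - par p ≠ 0 := sub_ne_zero.mpr (fun h => hpq (hpar h).symm)
  have hPA : par p - par a ≠ 0 := sub_ne_zero.mpr (fun h => hap (hpar h).symm)
  have hPB : par p - par b ≠ 0 := sub_ne_zero.mpr (fun h => hbp (hpar h).symm)
  have hPQ : par p - par q ≠ 0 := sub_ne_zero.mpr (fun h => hpq (hpar h))
  have h1 := hS a p q hap haq hpq x
  have h2 := hS p b q (Ne.symm hbp) hpq hbq x
  have h3 := hS a b q hab haq hbq x
  have h4 := hS a q p haq hap (Ne.symm hpq) x
  have h5 := hS q b p (Ne.symm hbq) (Ne.symm hpq) hbp x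
  have h6 := hS a b p hab hap hbp x
  have e1 : pd q (S a p) x
      = (par a - par p) * (S a q x * S q p x - S a p x)
        / ((par q - par a) * (par q - par p)) := by
    rw [eq_div_iff (mul_ne_zero hQA hQP)]; linear_combination h1
  have e2 : pd q (S p b) x
      = (par p - par b) * (S p q x * S q b x - S p b x)
        / ((par q - par p) * (par q - par b)) := by
    rw [eq_div_iff (mul_ne_zero hQP hQB)]; linear_combination h2
  have e3 : pd q (S a b) x
      = (par a - par b) * (S a q x * S q b x - S a b x)
        / ((par q - par a) * (par q - par b)) := by
    rw [eq_div_iff (mul_ne_zero hQA hQB)]; linear_combination h3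
  have e4 : pd p (S a q) x
      = (par a - par q) * (S a p x * S p q x - S a q x)
        / ((par p - par a) * (par p - par q)) := by
    rw [eq_div_iff (mul_ne_zero hPA hPQ)]; linear_combination h4
  have e5 : pd p (S q b) x
      = (par q - par b) * (S q p x * S p b x - S q b x)
        / ((par p - par q) * (par p - par b)) := by
    rw [eq_div_iff (mul_ne_zero hPQ hPB)]; linear_combination h5
  have e6 : pd p (S a b) x
      = (par a - par b) * (S a p x * S p b x - S a b x)
        / ((par p - par a) * (par p - par b)) := by
    rw [eq_div_iff (mul_ne_zero hPA hPB)]; linear_combination h6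
  constructor
  · rw [pd_combo q (par a - par b) (S a p) (S p b) (S a b)
        ((hSsmooth a p hap).differentiable (by simp))
        ((hSsmooth p b (Ne.symm hbp)).differentiable (by simp))
        ((hSsmooth a b hab).differentiable (by simp)),
      pd_combo p (par a - par b) (S a q) (S q b) (S a b)
        ((hSsmooth a q haq).differentiable (by simp))
        ((hSsmooth q b (Ne.symm hbq)).differentiable (by simp))
        ((hSsmooth a b hab).differentiable (by simp)),
      e1, e2, e3, e4, e5, e6]
    field_simp
    ring
  · exact pd_comm p q (S a b) (hSsmooth a b hab) x
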